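/- Let e ≥ 2. If G_{2^m·s}/2 ≡ 1 (mod 2^e) but G_{2^m·s}/2 ≢ 1 (mod 2^{e+1}) (with G_{2^m·s} even), then for every positive integer l: G_{2^{m+l}·s}/2 ≡ 1 (mod 2^{e+2l}) and G_{2^{m+l}·s}/2 ≢ 1 (mod 2^{e+2l+1}). -/
import Mathlib


def G (A : ℤ) : ℕ → ℤ
  | 0 => 2
  | 1 => A
  | n + 2 => A * G A (n + 1) - G A n

lemma G_inv (A : ℤ) : ∀ n, G A (n+1)^2 - A * G A n * G A (n+1) + G A n ^ 2 = 4 - A^2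
  | 0 => by simp [G]; ring
  | n+1 => by
    have h := G_inv A n
    have h5 : G A (n+2) = A * G A (n+1) - G A n := rfl
    rw [h5]; linear_combination h

lemma G_double_aux (A : ℤ) :
    ∀ n, G A (2*n) = G A n ^ 2 - 2 ∧ G A (2*n+1) = G A n * G A (n+1) - A
  | 0 => by constructor <;> simp [G] <;> ring
  | n+1 => by
    obtain ⟨h1, h2⟩ := G_double_aux A n
    have hinv := G_inv A n
    have h3 : G A (2*n+2) = A * G A (2*n+1) - G A (2*n) := rfl
    have h4 : G A (2*n+3) = A * G A (2*n+2) - G A (2*n+1) := rfl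
    have h5 : G A (n+2) = A * G A (n+1) - G A n := rfl
    have e1 : 2*(n+1) = 2*n+2 := by ring
    have e2 : 2*(n+1)+1 = 2*n+3 := by ring
    rw [e2, e1, h3, h4, h3, h5, h1, h2]
    constructor
    · linear_combination -hinv
    · linear_combination -A * hinv

lemma G_double (A : ℤ) (n : ℕ) : G A (2*n) = G A n ^ 2 - 2 := (G_double_aux A n).1

lemma step_lemma (t : ℤ) (e : ℕ) (he : 2 ≤ e) (h1 : t ≡ 1 [ZMOD (2:ℤ)^e])
    (h2 : ¬ t ≡ 1 [ZMOD (2:ℤ)^(e+1)]) :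
    (2*t^2 - 1 ≡ 1 [ZMOD (2:ℤ)^(e+2)]) ∧ ¬ (2*t^2 - 1 ≡ 1 [ZMOD (2:ℤ)^(e+3)]) := by
  obtain ⟨f, rfl⟩ : ∃ f, e = f + 2 := ⟨e - 2, by omega⟩
  obtain ⟨c, hc⟩ := (Int.modEq_iff_dvd.mp h1)
  -- hc : 1 - t = 2^(f+2) * c
  have ht : t = 1 - 2^(f+2)*c := by linarith
  have hcodd : ¬ (2 : ℤ) ∣ c := by
    rintro ⟨d, rfl⟩
    apply h2
    rw [Int.modEq_iff_dvd]
    exact ⟨d, by rw [hc]; ring⟩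
  constructor
  · rw [Int.modEq_iff_dvd]
    exact ⟨c - 2^(f+1)*c^2, by rw [ht]; ring⟩
  · intro hcon
    rw [Int.modEq_iff_dvd] at hcon
    obtain ⟨d, hd⟩ := hcon
    apply hcodd
    refine ⟨d + 2^f*c^2, ?_⟩
    have key : (2:ℤ)^(f+4) * (c - 2^(f+1)*c^2) = 2^(f+4) * (2*d) := by
      have h9 : (1:ℤ) - (2*t^2 - 1) = 2^(f+4) * (c - 2^(f+1)*c^2) := by rw [ht]; ring
      rw [← h9, hd]; ring
    have h10 := mul_left_cancel₀ (a := (2:ℤ)^(f+4)) (by positivity) key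
    linear_combination h10

lemma main_aux (A : ℤ) (m s e : ℕ) (he : 2 ≤ e)
    (heven : Even (G A (2 ^ m * s)))
    (h1 : G A (2 ^ m * s) / 2 ≡ 1 [ZMOD 2 ^ e])
    (h2 : ¬ G A (2 ^ m * s) / 2 ≡ 1 [ZMOD 2 ^ (e + 1)]) :
    ∀ l : ℕ, Even (G A (2 ^ (m + l) * s)) ∧
      (G A (2 ^ (m + l) * s) / 2 ≡ 1 [ZMOD 2 ^ (e + 2 * l)]) ∧
      ¬ G A (2 ^ (m + l) * s) / 2 ≡ 1 [ZMOD 2 ^ (e + 2 * l + 1)] := by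
  intro l
  induction l with
  | zero => simpa using ⟨heven, h1, h2⟩
  | succ l ih =>
    obtain ⟨ihe, ih1, ih2⟩ := ih
    obtain ⟨t, htt⟩ := ihe
    have hG : G A (2 ^ (m + l) * s) = 2 * t := by linarith
    have hdiv : G A (2 ^ (m + l) * s) / 2 = t := by rw [hG]; omega
    rw [hdiv] at ih1 ih2
    have hidx : 2 ^ (m + (l+1)) * s = 2 * (2 ^ (m + l) * s) := by ring
    have hnext : G A (2 ^ (m + (l+1)) * s) = 2 * (2*t^2 - 1) := by
      rw [hidx, G_double, hG]; ring
    have hdiv2 : G A (2 ^ (m + (l+1)) * s) / 2 = 2*t^2 - 1 := by rw [hnext]; omega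
    obtain ⟨s1, s2⟩ := step_lemma t (e + 2*l) (by omega) ih1 ih2
    have e1 : e + 2*(l+1) = e + 2*l + 2 := by ring
    have e2 : e + 2*(l+1) + 1 = e + 2*l + 3 := by ring
    refine ⟨⟨2*t^2 - 1, by rw [hnext]; ring⟩, ?_, ?_⟩
    · rw [hdiv2, e1]; exact_mod_cast s1
    · rw [hdiv2, e2]; exact_mod_cast s2

theorem G_lifting (A : ℤ) (m s e : ℕ) (hs : 1 ≤ s) (he : 2 ≤ e)
    (heven : Even (G A (2 ^ m * s)))
    (h1 : G A (2 ^ m * s) / 2 ≡ 1 [ZMOD 2 ^ e])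
    (h2 : ¬ G A (2 ^ m * s) / 2 ≡ 1 [ZMOD 2 ^ (e + 1)]) :
    ∀ l : ℕ, 1 ≤ l →
      G A (2 ^ (m + l) * s) / 2 ≡ 1 [ZMOD 2 ^ (e + 2 * l)] ∧
      ¬ G A (2 ^ (m + l) * s) / 2 ≡ 1 [ZMOD 2 ^ (e + 2 * l + 1)] := by
  intro l _
  exact (main_aux A m s e he heven h1 h2 l).2
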